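/- arXiv:2301.11186 — 2 statements merged into one kernel-verified Lean document; each statement's English description precedes it below -/
import Mathlib

section
/- Let α = (α_n)_{n∈ℕ₀} be an exponent sequence with limsup_{n→∞} α_{n+1}/α_n < ∞, and let w ∈ 𝕂^{ℕ₀}. Then the following are equivalent: (i) B_w maps Λ_0(α) into itself; (ii) B_w is continuous on Λ_0(α); (iii) F_w maps Λ_0(α) into itself; (iv) F_w is continuous on Λ_0(α); (v) limsup_{n→∞} ln|w_n| / α_n ≤ 0. -/
open Filter Finset
open scoped ENNReal

noncomputable section

variable {𝕜 : Type*} [RCLike 𝕜]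

/-- The parameter `p ∈ [1,∞] ∪ {0}` indexing a Köthe echelon space `λ_p(A)`:
`lp p _` stands for `p ∈ [1,∞)`, `linf` for `p = ∞` and `lzero` for `p = 0`. -/
inductive PIndex : Type
  | lp : (p : ℝ) → (hp : 1 ≤ p) → PIndex
  | linf : PIndex
  | lzero : PIndex

/-- `a` is a Köthe matrix. -/
def IsKoetheMatrix (a : ℕ → ℕ → ℝ) : Prop :=
  (∀ n k, 0 ≤ a n k) ∧ (∀ n k, a n k ≤ a n (k + 1)) ∧ ∀ n, ∃ k, 0 < a n k

/-- Membership in the Köthe echelon space `λ_p(A)`. -/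
def MemLambda (a : ℕ → ℕ → ℝ) (P : PIndex) (x : ℕ → 𝕜) : Prop :=
  match P with
  | .lp p _ => ∀ k, Summable fun n => (‖x n‖ * a n k) ^ p
  | .linf => ∀ k, BddAbove (Set.range fun n => ‖x n‖ * a n k)
  | .lzero => ∀ k, Tendsto (fun n => ‖x n‖ * a n k) atTop (nhds 0)

/-- The `k`-th canonical seminorm `‖·‖_{k,p}` of `λ_p(A)`. -/
def lambdaSeminorm (a : ℕ → ℕ → ℝ) (P : PIndex) (k : ℕ) (x : ℕ → 𝕜) : ℝ :=
  match P with
  | .lp p _ => (∑' n, (‖x n‖ * a n k) ^ p) ^ (1 / p)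
  | .linf => ⨆ n, ‖x n‖ * a n k
  | .lzero => ⨆ n, ‖x n‖ * a n k

/-- The weighted backward shift `B_w x = (w_n x_{n+1})_n`. -/
def Bshift (w : ℕ → 𝕜) (x : ℕ → 𝕜) : ℕ → 𝕜 := fun n => w n * x (n + 1)

/-- The weighted forward shift `F_w x = (w_n x_{n-1})_n`, with the convention `x_{-1} := 0`. -/
def Fshift (w : ℕ → 𝕜) (x : ℕ → 𝕜) : ℕ → 𝕜 := fun n => if n = 0 then 0 else w n * x (n - 1)

/-- `T` maps `λ_p(A)` into itself (i.e. `T` is correctly defined on `λ_p(A)`). -/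
def MapsLambda (a : ℕ → ℕ → ℝ) (P : PIndex) (T : (ℕ → 𝕜) → ℕ → 𝕜) : Prop :=
  ∀ x, MemLambda a P x → MemLambda a P (T x)

/-- `T` is a continuous operator on the Fréchet space `λ_p(A)`, expressed through the
fundamental (increasing) sequence of seminorms. -/
def ContinuousOnLambda (a : ℕ → ℕ → ℝ) (P : PIndex) (T : (ℕ → 𝕜) → ℕ → 𝕜) : Prop :=
  MapsLambda a P T ∧ ∀ k, ∃ l, ∃ C > 0, ∀ x, MemLambda a P x →
    lambdaSeminorm a P k (T x) ≤ C * lambdaSeminorm a P l x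

/-- `T` is topologizable on `λ_p(A)`: for every (fundamental) continuous seminorm there is a
continuous seminorm `q` such that for every `m ∈ ℕ` there is `γ_m > 0` with
`‖T^m x‖_k ≤ γ_m q(x)`. -/
def TopologizableOnLambda (a : ℕ → ℕ → ℝ) (P : PIndex) (T : (ℕ → 𝕜) → ℕ → 𝕜) : Prop :=
  ∀ k, ∃ l, ∀ m : ℕ, 1 ≤ m → ∃ γ > 0, ∀ x, MemLambda a P x →
    lambdaSeminorm a P k (T^[m] x) ≤ γ * lambdaSeminorm a P l x

/-- `T` is power bounded on `λ_p(A)`. -/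
def PowerBoundedOnLambda (a : ℕ → ℕ → ℝ) (P : PIndex) (T : (ℕ → 𝕜) → ℕ → 𝕜) : Prop :=
  ∀ k, ∃ l, ∃ C > 0, ∀ m : ℕ, 1 ≤ m → ∀ x, MemLambda a P x →
    lambdaSeminorm a P k (T^[m] x) ≤ C * lambdaSeminorm a P l x

/-- The `n`-th Cesàro mean `T^{[n]} = (1/n) ∑_{m=1}^n T^m`. -/
def cesaroMean (T : (ℕ → 𝕜) → ℕ → 𝕜) (n : ℕ) (x : ℕ → 𝕜) : ℕ → 𝕜 :=
  (n : 𝕜)⁻¹ • ∑ m ∈ Icc 1 n, T^[m] x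

/-- `T` is Cesàro bounded on `λ_p(A)`: the Cesàro means form an equicontinuous family. -/
def CesaroBoundedOnLambda (a : ℕ → ℕ → ℝ) (P : PIndex) (T : (ℕ → 𝕜) → ℕ → 𝕜) : Prop :=
  ∀ k, ∃ l, ∃ C > 0, ∀ n : ℕ, 1 ≤ n → ∀ x, MemLambda a P x →
    lambdaSeminorm a P k (cesaroMean T n x) ≤ C * lambdaSeminorm a P l x

/-- `T` is mean ergodic on `λ_p(A)`: there is a continuous linear operator `P` on `λ_p(A)` such
that the Cesàro means `T^{[n]} x` converge to `P x` for every `x ∈ λ_p(A)`. -/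
def MeanErgodicOnLambda (a : ℕ → ℕ → ℝ) (P : PIndex) (T : (ℕ → 𝕜) → ℕ → 𝕜) : Prop :=
  ∃ Pr : (ℕ → 𝕜) →ₗ[𝕜] (ℕ → 𝕜),
    (∀ x, MemLambda a P x → MemLambda a P (Pr x)) ∧
    (∀ k, ∃ l, ∃ C > 0, ∀ x, MemLambda a P x →
      lambdaSeminorm a P k (Pr x) ≤ C * lambdaSeminorm a P l x) ∧
    ∀ x, MemLambda a P x → ∀ k,
      Tendsto (fun n => lambdaSeminorm a P k (cesaroMean T n x - Pr x)) atTop (nhds 0)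

/-- `T` is uniformly mean ergodic on `λ_p(A)`: in addition the convergence of the Cesàro means
is uniform on bounded subsets of `λ_p(A)`. -/
def UniformlyMeanErgodicOnLambda (a : ℕ → ℕ → ℝ) (P : PIndex) (T : (ℕ → 𝕜) → ℕ → 𝕜) : Prop :=
  ∃ Pr : (ℕ → 𝕜) →ₗ[𝕜] (ℕ → 𝕜),
    (∀ x, MemLambda a P x → MemLambda a P (Pr x)) ∧
    (∀ k, ∃ l, ∃ C > 0, ∀ x, MemLambda a P x →
      lambdaSeminorm a P k (Pr x) ≤ C * lambdaSeminorm a P l x) ∧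
    ∀ S : Set (ℕ → 𝕜), (∀ x ∈ S, MemLambda a P x) →
      (∀ l, ∃ M : ℝ, ∀ x ∈ S, lambdaSeminorm a P l x ≤ M) →
      ∀ k, ∀ ε > 0, ∃ N : ℕ, ∀ n ≥ N, ∀ x ∈ S,
        lambdaSeminorm a P k (cesaroMean T n x - Pr x) ≤ ε

/-- An exponent sequence: monotonically increasing, non-negative, tending to infinity. -/
def IsExponentSeq (al : ℕ → ℝ) : Prop :=
  Monotone al ∧ (∀ n, 0 ≤ al n) ∧ Tendsto al atTop atTop

/-- The Köthe matrix of the power series space of infinite type `Λ_∞(α)`. -/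
def AInf (al : ℕ → ℝ) : ℕ → ℕ → ℝ := fun n k => Real.exp (k * al n)

/-- The Köthe matrix of the power series space of finite type `Λ_0(α)`. -/
def AZero (al : ℕ → ℝ) : ℕ → ℕ → ℝ := fun n k => Real.exp (-al n / (k + 1))

/-- Power series spaces are the `λ_1` spaces of the above matrices. -/
abbrev L1 : PIndex := PIndex.lp 1 le_rfl


/-! ### Auxiliary lemmas -/

open scoped Classical

section Helpers

variable {𝕜 : Type*} [RCLike 𝕜] {al : ℕ → ℝ} {w : ℕ → 𝕜}

lemma memL1_iff (a : ℕ → ℕ → ℝ) (x : ℕ → 𝕜) :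
    MemLambda a L1 x ↔ ∀ k, Summable fun n => ‖x n‖ * a n k := by
  show (∀ k, Summable fun n => (‖x n‖ * a n k) ^ (1 : ℝ)) ↔ _
  simp [Real.rpow_one]

lemma semiL1 (a : ℕ → ℕ → ℝ) (k : ℕ) (x : ℕ → 𝕜) :
    lambdaSeminorm a L1 k x = ∑' n, ‖x n‖ * a n k := by
  show (∑' n, (‖x n‖ * a n k) ^ (1 : ℝ)) ^ (1 / (1 : ℝ)) = _
  simp [Real.rpow_one]

lemma contB_of_bound (a : ℕ → ℕ → ℝ) (hpos : ∀ n k, 0 < a n k)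
    (hb : ∀ k, ∃ l, ∃ C > (0 : ℝ), ∀ n, ‖w n‖ * a n k ≤ C * a (n + 1) l) :
    ContinuousOnLambda a L1 (Bshift w) := by
  have core : ∀ k l C, 0 < C → (∀ n, ‖w n‖ * a n k ≤ C * a (n + 1) l) →
      ∀ x : ℕ → 𝕜, Summable (fun n => ‖x n‖ * a n l) →
      Summable (fun n => ‖Bshift w x n‖ * a n k) ∧
        ∑' n, ‖Bshift w x n‖ * a n k ≤ C * ∑' n, ‖x n‖ * a n l := by
    intro k l C hC hbd x hx
    have hnn : ∀ n, 0 ≤ ‖x n‖ * a n l := fun n => mul_nonneg (norm_nonneg _) (hpos n l).le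
    have hle : ∀ n, ‖Bshift w x n‖ * a n k ≤ C * (‖x (n + 1)‖ * a (n + 1) l) := by
      intro n
      have hB : ‖Bshift w x n‖ = ‖w n‖ * ‖x (n + 1)‖ := norm_mul _ _
      rw [hB]
      calc ‖w n‖ * ‖x (n + 1)‖ * a n k = ‖x (n + 1)‖ * (‖w n‖ * a n k) := by ring
        _ ≤ ‖x (n + 1)‖ * (C * a (n + 1) l) :=
            mul_le_mul_of_nonneg_left (hbd n) (norm_nonneg _)
        _ = C * (‖x (n + 1)‖ * a (n + 1) l) := by ring
    have hs1 : Summable fun n => ‖x (n + 1)‖ * a (n + 1) l := (summable_nat_add_iff 1).2 hx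
    have hs2 : Summable fun n => C * (‖x (n + 1)‖ * a (n + 1) l) := hs1.mul_left C
    have hsB : Summable fun n => ‖Bshift w x n‖ * a n k :=
      hs2.of_nonneg_of_le (fun n => mul_nonneg (norm_nonneg _) (hpos n k).le) hle
    refine ⟨hsB, ?_⟩
    calc ∑' n, ‖Bshift w x n‖ * a n k ≤ ∑' n, C * (‖x (n + 1)‖ * a (n + 1) l) :=
          Summable.tsum_le_tsum hle hsB hs2
      _ = C * ∑' n, ‖x (n + 1)‖ * a (n + 1) l := tsum_mul_left
      _ ≤ C * ∑' n, ‖x n‖ * a n l := by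
          refine mul_le_mul_of_nonneg_left ?_ hC.le
          exact Summable.tsum_le_tsum_of_inj (fun n => n + 1) (add_left_injective 1)
            (fun c _ => hnn c) (fun i => le_rfl) hs1 hx
  constructor
  · intro x hx
    rw [memL1_iff] at hx ⊢
    intro k
    obtain ⟨l, C, hC, hbd⟩ := hb k
    exact (core k l C hC hbd x (hx l)).1
  · intro k
    obtain ⟨l, C, hC, hbd⟩ := hb k
    refine ⟨l, C, hC, fun x hx => ?_⟩
    rw [semiL1, semiL1]
    exact (core k l C hC hbd x ((memL1_iff _ x).1 hx l)).2

lemma contF_of_bound (a : ℕ → ℕ → ℝ) (hpos : ∀ n k, 0 < a n k)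
    (hb : ∀ k, ∃ l, ∃ C > (0 : ℝ), ∀ n, ‖w (n + 1)‖ * a (n + 1) k ≤ C * a n l) :
    ContinuousOnLambda a L1 (Fshift w) := by
  have hF0 : ∀ x : ℕ → 𝕜, ‖Fshift w x 0‖ * a 0 0 = 0 ∧ ∀ k, ‖Fshift w x 0‖ * a 0 k = 0 := by
    intro x
    constructor <;> simp [Fshift]
  have core : ∀ k l C, 0 < C → (∀ n, ‖w (n + 1)‖ * a (n + 1) k ≤ C * a n l) →
      ∀ x : ℕ → 𝕜, Summable (fun n => ‖x n‖ * a n l) →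
      Summable (fun n => ‖Fshift w x n‖ * a n k) ∧
        ∑' n, ‖Fshift w x n‖ * a n k ≤ C * ∑' n, ‖x n‖ * a n l := by
    intro k l C hC hbd x hx
    have hle : ∀ n, ‖Fshift w x (n + 1)‖ * a (n + 1) k ≤ C * (‖x n‖ * a n l) := by
      intro n
      have hFn : ‖Fshift w x (n + 1)‖ = ‖w (n + 1)‖ * ‖x n‖ := by
        simp [Fshift, norm_mul]
      rw [hFn]
      calc ‖w (n + 1)‖ * ‖x n‖ * a (n + 1) k = ‖x n‖ * (‖w (n + 1)‖ * a (n + 1) k) := by ring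
        _ ≤ ‖x n‖ * (C * a n l) := mul_le_mul_of_nonneg_left (hbd n) (norm_nonneg _)
        _ = C * (‖x n‖ * a n l) := by ring
    have hs2 : Summable fun n => C * (‖x n‖ * a n l) := hx.mul_left C
    have hs1 : Summable fun n => ‖Fshift w x (n + 1)‖ * a (n + 1) k :=
      hs2.of_nonneg_of_le (fun n => mul_nonneg (norm_nonneg _) (hpos _ k).le) hle
    have hsF : Summable fun n => ‖Fshift w x n‖ * a n k := (summable_nat_add_iff 1).1 hs1
    refine ⟨hsF, ?_⟩
    rw [Summable.tsum_eq_zero_add hsF, (hF0 x).2 k, zero_add]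
    calc ∑' n, ‖Fshift w x (n + 1)‖ * a (n + 1) k ≤ ∑' n, C * (‖x n‖ * a n l) :=
          Summable.tsum_le_tsum hle hs1 hs2
      _ = C * ∑' n, ‖x n‖ * a n l := tsum_mul_left
  constructor
  · intro x hx
    rw [memL1_iff] at hx ⊢
    intro k
    obtain ⟨l, C, hC, hbd⟩ := hb k
    exact (core k l C hC hbd x (hx l)).1
  · intro k
    obtain ⟨l, C, hC, hbd⟩ := hb k
    refine ⟨l, C, hC, fun x hx => ?_⟩
    rw [semiL1, semiL1]
    exact (core k l C hC hbd x ((memL1_iff _ x).1 hx l)).2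

lemma bound_of_eventually {u v : ℕ → ℝ} (hu : ∀ n, 0 ≤ u n) (hv : ∀ n, 0 < v n)
    (h : ∀ᶠ n in atTop, u n ≤ v n) : ∃ C > (0 : ℝ), ∀ n, u n ≤ C * v n := by
  obtain ⟨N, hN⟩ := eventually_atTop.1 h
  have hsum : 0 ≤ ∑ m ∈ range N, u m / v m :=
    Finset.sum_nonneg fun m _ => div_nonneg (hu m) (hv m).le
  refine ⟨1 + ∑ m ∈ range N, u m / v m, by linarith, fun n => ?_⟩
  rcases lt_or_ge n N with hn | hn
  · have h1 : u n / v n ≤ ∑ m ∈ range N, u m / v m :=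
      Finset.single_le_sum (fun m _ => div_nonneg (hu m) (hv m).le) (mem_range.2 hn)
    have h2 : u n = u n / v n * v n := (div_mul_cancel₀ _ (hv n).ne').symm
    rw [h2]
    exact mul_le_mul_of_nonneg_right (by linarith) (hv n).le
  · have h3 := hN n hn
    nlinarith [hv n, hsum]

end Helpers

section Helpers2

variable {𝕜 : Type*} [RCLike 𝕜] {al : ℕ → ℝ} {w : ℕ → 𝕜}

lemma evB (hal : IsExponentSeq al)
    (hquot : IsBoundedUnder (· ≤ ·) atTop fun n => al (n + 1) / al n)
    (hv : ∀ ε > (0 : ℝ), ∀ᶠ n in atTop, Real.log ‖w n‖ / al n ≤ ε) (k : ℕ) :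
    ∃ l, ∀ᶠ n in atTop, ‖w n‖ * AZero al n k ≤ AZero al (n + 1) l := by
  obtain ⟨Q₀, hQ₀⟩ := hquot
  rw [eventually_map] at hQ₀
  set Q : ℝ := max Q₀ 1 with hQdef
  have hQ1 : (1 : ℝ) ≤ Q := le_max_right _ _
  set l : ℕ := ⌈2 * Q * ((k : ℝ) + 1)⌉₊ with hldef
  have hl : 2 * Q * ((k : ℝ) + 1) ≤ (l : ℝ) + 1 := (Nat.le_ceil _).trans (by linarith)
  have hε : ∀ᶠ n in atTop, Real.log ‖w n‖ / al n ≤ 1 / (2 * ((k : ℝ) + 1)) :=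
    hv _ (by positivity)
  have h1 : ∀ᶠ n in atTop, (1 : ℝ) ≤ al n := hal.2.2.eventually_ge_atTop 1
  refine ⟨l, ?_⟩
  filter_upwards [hε, hQ₀, h1] with n hwn hqn han
  have hapos : 0 < al n := lt_of_lt_of_le one_pos han
  have hlog : Real.log ‖w n‖ ≤ al n / (2 * ((k : ℝ) + 1)) := by
    rw [div_le_iff₀ hapos] at hwn
    have hid : al n / (2 * ((k : ℝ) + 1)) = 1 / (2 * ((k : ℝ) + 1)) * al n := by ring
    linarith
  have hq : al (n + 1) ≤ Q * al n := by
    have h2 : al (n + 1) / al n ≤ Q := le_trans hqn (le_max_left _ _)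
    rw [div_le_iff₀ hapos] at h2
    linarith
  have hkey : al (n + 1) / ((l : ℝ) + 1) ≤ al n / (2 * ((k : ℝ) + 1)) := by
    rw [div_le_div_iff₀ (by positivity) (by positivity)]
    nlinarith [hq, hl, hapos, hQ1]
  rcases eq_or_lt_of_le (norm_nonneg (w n)) with h0 | h0
  · rw [← h0, zero_mul]
    exact (Real.exp_pos _).le
  · rw [← Real.exp_log h0]
    show Real.exp _ * Real.exp _ ≤ Real.exp _
    rw [← Real.exp_add, Real.exp_le_exp]
    have hid2 : al n / (2 * ((k : ℝ) + 1)) + al n / (2 * ((k : ℝ) + 1)) = al n / ((k : ℝ) + 1) := by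
      field_simp
      ring
    have hgoal : -al n / ((k : ℝ) + 1) = -(al n / ((k : ℝ) + 1)) := by ring
    rw [hgoal]
    have hgoal2 : -al (n + 1) / ((l : ℝ) + 1) = -(al (n + 1) / ((l : ℝ) + 1)) := by ring
    rw [hgoal2]
    linarith

lemma evF (hal : IsExponentSeq al)
    (hv : ∀ ε > (0 : ℝ), ∀ᶠ n in atTop, Real.log ‖w n‖ / al n ≤ ε) (k : ℕ) :
    ∃ l, ∀ᶠ n in atTop, ‖w (n + 1)‖ * AZero al (n + 1) k ≤ AZero al n l := by
  refine ⟨k + 1, ?_⟩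
  have hε : ∀ᶠ n in atTop, Real.log ‖w n‖ / al n ≤ 1 / (((k : ℝ) + 1) * ((k : ℝ) + 2)) :=
    hv _ (by positivity)
  have h1 : ∀ᶠ n in atTop, (1 : ℝ) ≤ al n := hal.2.2.eventually_ge_atTop 1
  obtain ⟨N₁, hN₁⟩ := eventually_atTop.1 hε
  obtain ⟨N₂, hN₂⟩ := eventually_atTop.1 h1
  rw [eventually_atTop]
  refine ⟨N₁ + N₂, fun n hn => ?_⟩
  have hw := hN₁ (n + 1) (by omega)
  have ha1 := hN₂ (n + 1) (by omega)
  have hapos : 0 < al (n + 1) := lt_of_lt_of_le one_pos ha1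
  have hmono : al n ≤ al (n + 1) := hal.1 (Nat.le_succ n)
  have hlog : Real.log ‖w (n + 1)‖ ≤ al (n + 1) * (1 / (((k : ℝ) + 1) * ((k : ℝ) + 2))) := by
    rw [div_le_iff₀ hapos] at hw
    linarith
  rcases eq_or_lt_of_le (norm_nonneg (w (n + 1))) with h0 | h0
  · rw [← h0, zero_mul]
    exact (Real.exp_pos _).le
  · rw [← Real.exp_log h0]
    show Real.exp _ * Real.exp _ ≤ Real.exp _
    rw [← Real.exp_add, Real.exp_le_exp]
    have hid : al (n + 1) / ((k : ℝ) + 1) - al (n + 1) / ((k : ℝ) + 2) =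
        al (n + 1) * (1 / (((k : ℝ) + 1) * ((k : ℝ) + 2))) := by
      field_simp
      ring
    have hm2 : al n / ((k : ℝ) + 2) ≤ al (n + 1) / ((k : ℝ) + 2) := by gcongr
    have hc : ((k + 1 : ℕ) : ℝ) + 1 = (k : ℝ) + 2 := by push_cast; ring
    rw [hc]
    have hg1 : -al (n + 1) / ((k : ℝ) + 1) = -(al (n + 1) / ((k : ℝ) + 1)) := by ring
    have hg2 : -al n / ((k : ℝ) + 2) = -(al n / ((k : ℝ) + 2)) := by ring
    rw [hg1, hg2]
    linarith

end Helpers2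

section Helpers3

variable {𝕜 : Type*} [RCLike 𝕜] {al : ℕ → ℝ} {w : ℕ → 𝕜}

/-- The test vector supported on the range of `ψ`. -/
def testX (al : ℕ → ℝ) (δ : ℝ) (ψ : ℕ → ℕ) : ℕ → 𝕜 := fun m =>
  if m ∈ Set.range ψ then ((Real.exp (-(δ * al m)) : ℝ) : 𝕜) else 0

lemma testX_apply (δ : ℝ) (ψ : ℕ → ℕ) (j : ℕ) :
    (testX al δ ψ (ψ j) : 𝕜) = ((Real.exp (-(δ * al (ψ j))) : ℝ) : 𝕜) :=
  if_pos ⟨j, rfl⟩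

lemma mem_testX (hal : IsExponentSeq al) {δ : ℝ} (hδ : 0 < δ) (ψ : ℕ → ℕ)
    (hψ : Function.Injective ψ) (hj : ∀ j : ℕ, (j : ℝ) ≤ al (ψ j)) :
    MemLambda (AZero al) L1 (testX al δ ψ : ℕ → 𝕜) := by
  rw [memL1_iff]
  intro k
  set f : ℕ → ℝ := fun m => ‖(testX al δ ψ m : 𝕜)‖ * AZero al m k with hf
  have hzero : ∀ m, m ∉ Set.range ψ → f m = 0 := by
    intro m hm
    simp only [hf, testX, if_neg hm, norm_zero, zero_mul]
  rw [← Function.Injective.summable_iff hψ hzero]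
  have h0al : ∀ j : ℕ, (0 : ℝ) ≤ al (ψ j) := fun j => le_trans (Nat.cast_nonneg j) (hj j)
  have hle : ∀ j, (f ∘ ψ) j ≤ Real.exp (-δ) ^ j := by
    intro j
    have : (f ∘ ψ) j = Real.exp (-(δ * al (ψ j))) * AZero al (ψ j) k := by
      simp only [Function.comp, hf, testX_apply, RCLike.norm_ofReal,
        abs_of_pos (Real.exp_pos _)]
    rw [this, ← Real.exp_nat_mul]
    show Real.exp _ * Real.exp _ ≤ _
    rw [← Real.exp_add, Real.exp_le_exp]
    have h1 : δ * (j : ℝ) ≤ δ * al (ψ j) := mul_le_mul_of_nonneg_left (hj j) hδ.le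
    have h2 : 0 ≤ al (ψ j) / ((k : ℝ) + 1) := div_nonneg (h0al j) (by positivity)
    have h3 : -al (ψ j) / ((k : ℝ) + 1) = -(al (ψ j) / ((k : ℝ) + 1)) := by ring
    rw [h3]
    nlinarith
  refine Summable.of_nonneg_of_le (fun j => ?_) hle
    (summable_geometric_of_lt_one (Real.exp_pos _).le (Real.exp_lt_one_iff.2 (by linarith)))
  exact mul_nonneg (norm_nonneg _) (Real.exp_pos _).le

lemma extract_seq (hal : IsExponentSeq al) {ε : ℝ}
    (hfreq : ∃ᶠ n in atTop, ε * al n < Real.log ‖w n‖) :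
    ∃ φ : ℕ → ℕ, StrictMono φ ∧ ∀ j,
      (1 ≤ φ j ∧ (1 : ℝ) ≤ al (φ j)) ∧ ε * al (φ j) < Real.log ‖w (φ j)‖ ∧
        (j : ℝ) ≤ al (φ j - 1) := by
  have h : ∀ j : ℕ, ∃ᶠ n in atTop,
      (1 ≤ n ∧ (1 : ℝ) ≤ al n) ∧ ε * al n < Real.log ‖w n‖ ∧ (j : ℝ) ≤ al (n - 1) := by
    intro j
    have hev : ∀ᶠ n in atTop, 1 ≤ n ∧ (1 : ℝ) ≤ al n ∧ (j : ℝ) ≤ al (n - 1) := by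
      have h2 : ∀ᶠ m in atTop, max 1 (j : ℝ) ≤ al m := hal.2.2.eventually_ge_atTop _
      obtain ⟨M, hM⟩ := eventually_atTop.1 h2
      rw [eventually_atTop]
      exact ⟨M + 1, fun n hn => ⟨by omega,
        le_trans (le_max_left _ _) (hM n (by omega)),
        le_trans (le_max_right _ _) (hM (n - 1) (by omega))⟩⟩
    refine (hfreq.and_eventually hev).mono ?_
    rintro n ⟨h1, h2, h3, h4⟩
    exact ⟨⟨h2, h3⟩, h1, h4⟩
  obtain ⟨φ, hmono, hφ⟩ := Filter.extraction_forall_of_frequently h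
  exact ⟨φ, hmono, fun j => ⟨⟨(hφ j).1.1, (hφ j).1.2⟩, (hφ j).2.1, (hφ j).2.2⟩⟩

lemma not_eventually_to_freq (hal : IsExponentSeq al) {ε : ℝ}
    (hcon : ¬ ∀ᶠ n in atTop, Real.log ‖w n‖ / al n ≤ ε) :
    ∃ᶠ n in atTop, ε * al n < Real.log ‖w n‖ := by
  rw [not_eventually] at hcon
  refine (hcon.and_eventually (hal.2.2.eventually_ge_atTop 1)).mono ?_
  rintro n ⟨h2, h3⟩
  rw [not_le] at h2
  have hpos : 0 < al n := by linarith
  rw [lt_div_iff₀ hpos] at h2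
  linarith

end Helpers3

/-- Corollary 2.2 (b): on `Λ_0(α)`, for `α` with `limsup α_{n+1}/α_n < ∞`, correct definedness
and continuity of `B_w` and `F_w` are all equivalent to `limsup (ln |w_n|)/α_n ≤ 0`. -/
theorem statement2 {𝕜 : Type*} [RCLike 𝕜] (al : ℕ → ℝ) (hal : IsExponentSeq al)
    (hquot : IsBoundedUnder (· ≤ ·) atTop fun n => al (n + 1) / al n) (w : ℕ → 𝕜) :
    [MapsLambda (AZero al) L1 (Bshift w),
     ContinuousOnLambda (AZero al) L1 (Bshift w),
     MapsLambda (AZero al) L1 (Fshift w),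
     ContinuousOnLambda (AZero al) L1 (Fshift w),
     ∀ ε > (0 : ℝ), ∀ᶠ n in atTop, Real.log ‖w n‖ / al n ≤ ε].TFAE := by
  have hApos : ∀ n k, 0 < AZero al n k := fun n k => Real.exp_pos _
  tfae_have 2 → 1
  · exact fun h => h.1
  tfae_have 4 → 3
  · exact fun h => h.1
  tfae_have 5 → 2
  · intro h5
    refine contB_of_bound (AZero al) hApos fun k => ?_
    obtain ⟨l, hev⟩ := evB hal hquot h5 k
    obtain ⟨C, hC, hC'⟩ := bound_of_eventually
      (fun n => mul_nonneg (norm_nonneg _) (hApos n k).le)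
      (fun n => hApos (n + 1) l) hev
    exact ⟨l, C, hC, hC'⟩
  tfae_have 5 → 4
  · intro h5
    refine contF_of_bound (AZero al) hApos fun k => ?_
    obtain ⟨l, hev⟩ := evF hal h5 k
    obtain ⟨C, hC, hC'⟩ := bound_of_eventually
      (fun n => mul_nonneg (norm_nonneg _) (hApos (n + 1) k).le)
      (fun n => hApos n l) hev
    exact ⟨l, C, hC, hC'⟩
  tfae_have 1 → 5
  · intro h1 ε hε
    by_contra hcon
    have hfreq := not_eventually_to_freq hal hcon
    obtain ⟨φ, hmono, hφ⟩ := extract_seq hal hfreq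
    obtain ⟨Q₀, hQ₀⟩ := hquot
    rw [eventually_map] at hQ₀
    set Q : ℝ := max Q₀ 1 with hQdef
    have hQ1 : (1 : ℝ) ≤ Q := le_max_right _ _
    set δ : ℝ := ε / (2 * Q) with hδdef
    have hδ : 0 < δ := div_pos hε (by linarith)
    set ψ : ℕ → ℕ := fun j => φ j + 1 with hψdef
    have hψ : StrictMono ψ := fun i j h => Nat.succ_lt_succ (hmono h)
    have hjal : ∀ j : ℕ, (j : ℝ) ≤ al (ψ j) := fun j =>
      le_trans (hφ j).2.2 (hal.1 (by simp only [hψdef]; omega : φ j - 1 ≤ ψ j))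
    set x : ℕ → 𝕜 := testX al δ ψ with hxdef
    have hxmem := mem_testX (𝕜 := 𝕜) hal hδ ψ hψ.injective hjal
    have hmem2 := h1 x hxmem
    set k : ℕ := ⌈4 / ε⌉₊ with hkdef
    have hk : 4 / ε ≤ (k : ℝ) + 1 := (Nat.le_ceil _).trans (by linarith)
    have hk4 : 4 ≤ ε * ((k : ℝ) + 1) := by
      rw [div_le_iff₀ hε] at hk
      linarith
    have hsum := (memL1_iff _ _).1 hmem2 k
    have htend : Tendsto (fun j => ‖Bshift w x (φ j)‖ * AZero al (φ j) k) atTop (nhds 0) :=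
      hsum.tendsto_atTop_zero.comp hmono.tendsto_atTop
    have hlt := htend.eventually (gt_mem_nhds one_pos)
    have hquot' : ∀ᶠ j in atTop, al (φ j + 1) ≤ Q * al (φ j) := by
      refine (hmono.tendsto_atTop.eventually hQ₀).mono fun j hj => ?_
      have hpos : 0 < al (φ j) := lt_of_lt_of_le one_pos (hφ j).1.2
      have h2 : al (φ j + 1) / al (φ j) ≤ Q := le_trans hj (le_max_left _ _)
      rw [div_le_iff₀ hpos] at h2
      linarith
    have hge : ∀ᶠ j in atTop, (1 : ℝ) ≤ ‖Bshift w x (φ j)‖ * AZero al (φ j) k := by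
      filter_upwards [hquot'] with j hqj
      have hx1 : x (φ j + 1) = ((Real.exp (-(δ * al (φ j + 1))) : ℝ) : 𝕜) := testX_apply δ ψ j
      have hnorm : ‖Bshift w x (φ j)‖ = ‖w (φ j)‖ * Real.exp (-(δ * al (φ j + 1))) := by
        show ‖w (φ j) * x (φ j + 1)‖ = _
        rw [hx1, norm_mul, RCLike.norm_ofReal, abs_of_pos (Real.exp_pos _)]
      have hlogw : ε * al (φ j) < Real.log ‖w (φ j)‖ := (hφ j).2.1
      have ha1 : (1 : ℝ) ≤ al (φ j) := (hφ j).1.2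
      have hεa : 0 < ε * al (φ j) := mul_pos hε (by linarith)
      have hwpos : 1 < ‖w (φ j)‖ := by
        by_contra hle
        push_neg at hle
        have := Real.log_nonpos (norm_nonneg _) hle
        linarith
      have hwge : Real.exp (ε * al (φ j)) ≤ ‖w (φ j)‖ := by
        rw [← Real.exp_log (by linarith : (0 : ℝ) < ‖w (φ j)‖)]
        exact Real.exp_le_exp.2 hlogw.le
      rw [hnorm]
      have hstep : Real.exp (ε * al (φ j)) * Real.exp (-(δ * al (φ j + 1))) * AZero al (φ j) k
          ≤ ‖w (φ j)‖ * Real.exp (-(δ * al (φ j + 1))) * AZero al (φ j) k :=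
        mul_le_mul_of_nonneg_right
          (mul_le_mul_of_nonneg_right hwge (Real.exp_pos _).le) (hApos _ _).le
      refine le_trans ?_ hstep
      show (1 : ℝ) ≤ Real.exp _ * Real.exp _ * Real.exp _
      rw [← Real.exp_add, ← Real.exp_add]
      refine Real.one_le_exp ?_
      have e1 : δ * al (φ j + 1) ≤ ε / 2 * al (φ j) := by
        have e1a : δ * al (φ j + 1) ≤ δ * (Q * al (φ j)) :=
          mul_le_mul_of_nonneg_left hqj hδ.le
        have e1b : δ * Q = ε / 2 := by
          rw [hδdef]
          field_simp
        nlinarith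
      have e2 : al (φ j) / ((k : ℝ) + 1) ≤ ε / 4 * al (φ j) := by
        rw [div_le_iff₀ (by positivity)]
        nlinarith
      have e3 : -al (φ j) / ((k : ℝ) + 1) = -(al (φ j) / ((k : ℝ) + 1)) := by ring
      rw [e3]
      linarith
    obtain ⟨j, hj1, hj2⟩ := (hge.and hlt).exists
    exact absurd hj2 (by linarith)
  tfae_have 3 → 5
  · intro h3 ε hε
    by_contra hcon
    have hfreq := not_eventually_to_freq hal hcon
    obtain ⟨φ, hmono, hφ⟩ := extract_seq hal hfreq
    set δ : ℝ := ε / 2 with hδdef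
    have hδ : 0 < δ := by positivity
    set ψ : ℕ → ℕ := fun j => φ j - 1 with hψdef
    have hψ : StrictMono ψ := by
      intro i j h
      have h1 := hmono h
      have h2 := (hφ i).1.1
      simp only [hψdef]
      omega
    have hjal : ∀ j : ℕ, (j : ℝ) ≤ al (ψ j) := fun j => (hφ j).2.2
    set x : ℕ → 𝕜 := testX al δ ψ with hxdef
    have hxmem := mem_testX (𝕜 := 𝕜) hal hδ ψ hψ.injective hjal
    have hmem2 := h3 x hxmem
    set k : ℕ := ⌈4 / ε⌉₊ with hkdef
    have hk : 4 / ε ≤ (k : ℝ) + 1 := (Nat.le_ceil _).trans (by linarith)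
    have hk4 : 4 ≤ ε * ((k : ℝ) + 1) := by
      rw [div_le_iff₀ hε] at hk
      linarith
    have hsum := (memL1_iff _ _).1 hmem2 k
    have htend : Tendsto (fun j => ‖Fshift w x (φ j)‖ * AZero al (φ j) k) atTop (nhds 0) :=
      hsum.tendsto_atTop_zero.comp hmono.tendsto_atTop
    have hlt := htend.eventually (gt_mem_nhds one_pos)
    have hge : ∀ᶠ j in atTop, (1 : ℝ) ≤ ‖Fshift w x (φ j)‖ * AZero al (φ j) k := by
      refine Eventually.of_forall fun j => ?_
      have hne : φ j ≠ 0 := by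
        have := (hφ j).1.1
        omega
      have hx1 : x (φ j - 1) = ((Real.exp (-(δ * al (φ j - 1))) : ℝ) : 𝕜) := testX_apply δ ψ j
      have hnorm : ‖Fshift w x (φ j)‖ = ‖w (φ j)‖ * Real.exp (-(δ * al (φ j - 1))) := by
        show ‖if φ j = 0 then (0 : 𝕜) else w (φ j) * x (φ j - 1)‖ = _
        rw [if_neg hne, hx1, norm_mul, RCLike.norm_ofReal, abs_of_pos (Real.exp_pos _)]
      have hlogw : ε * al (φ j) < Real.log ‖w (φ j)‖ := (hφ j).2.1
      have ha1 : (1 : ℝ) ≤ al (φ j) := (hφ j).1.2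
      have hεa : 0 < ε * al (φ j) := mul_pos hε (by linarith)
      have hwpos : 1 < ‖w (φ j)‖ := by
        by_contra hle
        push_neg at hle
        have := Real.log_nonpos (norm_nonneg _) hle
        linarith
      have hwge : Real.exp (ε * al (φ j)) ≤ ‖w (φ j)‖ := by
        rw [← Real.exp_log (by linarith : (0 : ℝ) < ‖w (φ j)‖)]
        exact Real.exp_le_exp.2 hlogw.le
      rw [hnorm]
      have hstep : Real.exp (ε * al (φ j)) * Real.exp (-(δ * al (φ j - 1))) * AZero al (φ j) k
          ≤ ‖w (φ j)‖ * Real.exp (-(δ * al (φ j - 1))) * AZero al (φ j) k :=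
        mul_le_mul_of_nonneg_right
          (mul_le_mul_of_nonneg_right hwge (Real.exp_pos _).le) (hApos _ _).le
      refine le_trans ?_ hstep
      show (1 : ℝ) ≤ Real.exp _ * Real.exp _ * Real.exp _
      rw [← Real.exp_add, ← Real.exp_add]
      refine Real.one_le_exp ?_
      have e1 : δ * al (φ j - 1) ≤ ε / 2 * al (φ j) := by
        have e1a : al (φ j - 1) ≤ al (φ j) := hal.1 (Nat.sub_le _ _)
        nlinarith
      have e2 : al (φ j) / ((k : ℝ) + 1) ≤ ε / 4 * al (φ j) := by
        rw [div_le_iff₀ (by positivity)]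
        nlinarith
      have e3 : -al (φ j) / ((k : ℝ) + 1) = -(al (φ j) / ((k : ℝ) + 1)) := by ring
      rw [e3]
      linarith
    obtain ⟨j, hj1, hj2⟩ := (hge.and hlt).exists
    exact absurd hj2 (by linarith)
  tfae_finish
end
end

section
/- Let A be a Köthe matrix, p ∈ [1,∞] ∪ {0}, and w ∈ 𝕂^{ℕ₀} such that F_w is continuous on λ_p(A). Then F_w is power bounded on λ_p(A) if and only if for every k ∈ ℕ₀ there is l ∈ ℕ₀ such that sup_{n∈ℕ₀, m∈ℕ} ( (∏_{j=1}^{m} |w_{n+j}|) · a_{n+m,k} ) / a_{n,l} < ∞. -/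
open Filter Finset
open scoped ENNReal

noncomputable section

variable {𝕜 : Type*} [RCLike 𝕜]

section Aux

variable {𝕜 : Type*} [RCLike 𝕜]

lemma fshift_apply (w : ℕ → 𝕜) (x : ℕ → 𝕜) (n : ℕ) :
    Fshift w x n = if n = 0 then 0 else w n * x (n - 1) := rfl

lemma fshift_iter_lt (w : ℕ → 𝕜) : ∀ m (x : ℕ → 𝕜) n, n < m → (Fshift w)^[m] x n = 0 := by
  intro m
  induction m with
  | zero => intro x n h; omega
  | succ m ih =>
    intro x n h
    rw [Function.iterate_succ_apply', fshift_apply]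
    rcases Nat.eq_zero_or_pos n with h0 | h0
    · simp [h0]
    · have : ¬ (n = 0) := by omega
      rw [if_neg this, ih x (n-1) (by omega), mul_zero]

lemma fshift_iter_add (w : ℕ → 𝕜) : ∀ m (x : ℕ → 𝕜) n,
    (Fshift w)^[m] x (n + m) = (∏ j ∈ Icc 1 m, w (n + j)) * x n := by
  intro m
  induction m with
  | zero => intro x n; simp
  | succ m ih =>
    intro x n
    rw [Function.iterate_succ_apply', show n + (m+1) = (n + m) + 1 by ring,
      fshift_apply, if_neg (by omega)]
    simp only [Nat.add_sub_cancel]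
    rw [ih x n, Finset.prod_Icc_succ_top (by omega), show n + (m+1) = (n+m)+1 by ring]
    ring

lemma norm_single (n i : ℕ) (c : 𝕜) :
    ‖(fun i => if i = n then c else 0 : ℕ → 𝕜) i‖ = if i = n then ‖c‖ else 0 := by
  by_cases h : i = n <;> simp [h]

lemma mem_single (a : ℕ → ℕ → ℝ) (ha : IsKoetheMatrix a) (P : PIndex) (n : ℕ) (c : 𝕜) :
    MemLambda a P (fun i => if i = n then c else 0) := by
  obtain ⟨ha0, _, _⟩ := ha
  cases P with
  | lp p hp =>
    intro k
    apply summable_of_ne_finset_zero (s := {n})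
    intro i hi
    simp only [Finset.mem_singleton] at hi
    rw [norm_single, if_neg hi, zero_mul, Real.zero_rpow (by linarith)]
  | linf =>
    intro k
    refine ⟨‖c‖ * a n k, ?_⟩
    rintro y ⟨i, rfl⟩
    simp only [norm_single]
    by_cases h : i = n
    · simp [h]
    · simp [h, mul_nonneg (norm_nonneg c) (ha0 n k)]
  | lzero =>
    intro k
    apply Tendsto.congr' (f₁ := fun _ => (0:ℝ))
    · filter_upwards [eventually_gt_atTop n] with i hi
      rw [norm_single, if_neg (by omega), zero_mul]
    · exact tendsto_const_nhds

lemma seminorm_single (a : ℕ → ℕ → ℝ) (ha : IsKoetheMatrix a) (P : PIndex) (k n : ℕ) (c : 𝕜) :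
    lambdaSeminorm a P k (fun i => if i = n then c else 0) = ‖c‖ * a n k := by
  obtain ⟨ha0, _, _⟩ := ha
  have hnn : 0 ≤ ‖c‖ * a n k := mul_nonneg (norm_nonneg c) (ha0 n k)
  have hsup : ∀ p', p' = PIndex.linf ∨ p' = PIndex.lzero →
      (⨆ i, ‖(fun i => if i = n then c else 0 : ℕ → 𝕜) i‖ * a i k) = ‖c‖ * a n k := by
    intro p' _
    apply le_antisymm
    · apply ciSup_le
      intro i
      simp only [norm_single]
      by_cases h : i = n
      · simp [h]
      · simp [h, hnn]
    · have hb : BddAbove (Set.range fun i => ‖(fun i => if i = n then c else 0 : ℕ → 𝕜) i‖ * a i k) := by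
        refine ⟨‖c‖ * a n k, ?_⟩
        rintro y ⟨i, rfl⟩
        simp only [norm_single]
        by_cases h : i = n
        · simp [h]
        · simp [h, hnn]
      have := le_ciSup hb n
      simpa [norm_single] using this
  cases P with
  | lp p hp =>
    have hp0 : p ≠ 0 := by linarith
    show (∑' i, (‖(fun i => if i = n then c else 0 : ℕ → 𝕜) i‖ * a i k) ^ p) ^ (1/p) = _
    rw [tsum_eq_single n]
    · simp only [norm_single, if_pos rfl, eq_self_iff_true, if_true]
      rw [one_div, Real.rpow_rpow_inv hnn hp0]
    · intro i hi
      simp only [norm_single, if_neg hi]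
      simp [Real.zero_rpow hp0]
  | linf => exact hsup PIndex.linf (Or.inl rfl)
  | lzero => exact hsup PIndex.lzero (Or.inr rfl)

end Aux
section Aux2

variable {𝕜 : Type*} [RCLike 𝕜]

lemma fshift_iter_single (w : ℕ → 𝕜) (n m : ℕ) :
    (Fshift w)^[m] (fun i => if i = n then (1:𝕜) else 0) =
    fun i => if i = n + m then (∏ j ∈ Icc 1 m, w (n + j)) else 0 := by
  funext i
  rcases lt_or_ge i m with h | h
  · rw [fshift_iter_lt w m _ i h, if_neg (by omega)]
  · obtain ⟨j, rfl⟩ : ∃ j, i = j + m := ⟨i - m, by omega⟩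
    rw [fshift_iter_add]
    by_cases hj : j = n
    · subst hj; simp
    · rw [if_neg hj, mul_zero, if_neg (by omega)]

lemma bound_seminorm (a : ℕ → ℕ → ℝ) (ha : IsKoetheMatrix a) (P : PIndex) (w : ℕ → 𝕜)
    (k l : ℕ) (C : ℝ) (hC : 0 ≤ C)
    (hb : ∀ n m, 1 ≤ m → (∏ j ∈ Icc 1 m, ‖w (n + j)‖) * a (n + m) k ≤ C * a n l)
    (m : ℕ) (hm : 1 ≤ m) (x : ℕ → 𝕜) (hx : MemLambda a P x) :
    lambdaSeminorm a P k ((Fshift w)^[m] x) ≤ C * lambdaSeminorm a P l x := by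
  obtain ⟨ha0, -, -⟩ := ha
  have key : ∀ n, ‖(Fshift w)^[m] x (n + m)‖ * a (n + m) k ≤ C * (‖x n‖ * a n l) := by
    intro n
    rw [fshift_iter_add, norm_mul, norm_prod]
    calc (∏ j ∈ Icc 1 m, ‖w (n + j)‖) * ‖x n‖ * a (n + m) k
        = ((∏ j ∈ Icc 1 m, ‖w (n + j)‖) * a (n + m) k) * ‖x n‖ := by ring
      _ ≤ (C * a n l) * ‖x n‖ := mul_le_mul_of_nonneg_right (hb n m hm) (norm_nonneg _)
      _ = C * (‖x n‖ * a n l) := by ring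
  have key0 : ∀ n, n < m → ‖(Fshift w)^[m] x n‖ * a n k = 0 := by
    intro n hn; rw [fshift_iter_lt w m x n hn, norm_zero, zero_mul]
  have hsupcase : BddAbove (Set.range fun n => ‖x n‖ * a n l) →
      (⨆ n, ‖(Fshift w)^[m] x n‖ * a n k) ≤ C * ⨆ n, ‖x n‖ * a n l := by
    intro hbdd
    have hsnn : 0 ≤ ⨆ n, ‖x n‖ * a n l :=
      le_trans (mul_nonneg (norm_nonneg _) (ha0 0 l)) (le_ciSup hbdd 0)
    apply ciSup_le
    intro n
    rcases lt_or_ge n m with h | h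
    · rw [key0 n h]; exact mul_nonneg hC hsnn
    · obtain ⟨j, rfl⟩ : ∃ j, n = j + m := ⟨n - m, by omega⟩
      exact le_trans (key j) (mul_le_mul_of_nonneg_left (le_ciSup hbdd j) hC)
  cases P with
  | lp p hp =>
    have hp0 : (0:ℝ) < p := by linarith
    have hg : Summable (fun n => (‖x n‖ * a n l) ^ p) := hx l
    set f : ℕ → ℝ := fun n => (‖(Fshift w)^[m] x n‖ * a n k) ^ p with hf
    have hfnn : ∀ n, 0 ≤ f n := fun n =>
      Real.rpow_nonneg (mul_nonneg (norm_nonneg _) (ha0 _ k)) p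
    have hfz : ∀ n, n < m → f n = 0 := by
      intro n hn
      rw [hf]; simp only
      rw [key0 n hn, Real.zero_rpow hp0.ne']
    have hle : ∀ n, f (n + m) ≤ C ^ p * (‖x n‖ * a n l) ^ p := by
      intro n
      rw [← Real.mul_rpow hC (mul_nonneg (norm_nonneg _) (ha0 n l))]
      exact Real.rpow_le_rpow (mul_nonneg (norm_nonneg _) (ha0 _ k)) (key n) hp0.le
    have hfs : Summable (fun n => f (n + m)) :=
      Summable.of_nonneg_of_le (fun n => hfnn _) hle (hg.mul_left (C ^ p))
    have hinj : Function.Injective (fun n : ℕ => n + m) := add_left_injective m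
    have htse : ∑' n, f (n + m) = ∑' n, f n := by
      apply hinj.tsum_eq
      intro i hi
      rcases lt_or_ge i m with h | h
      · exact absurd (hfz i h) hi
      · exact ⟨i - m, Nat.sub_add_cancel h⟩
    show (∑' n, (‖(Fshift w)^[m] x n‖ * a n k) ^ p) ^ (1/p)
        ≤ C * (∑' n, (‖x n‖ * a n l) ^ p) ^ (1/p)
    have h1 : ∑' n, f n ≤ C ^ p * ∑' n, (‖x n‖ * a n l) ^ p := by
      rw [← htse, ← tsum_mul_left]
      exact Summable.tsum_le_tsum hle hfs (hg.mul_left _)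
    calc (∑' n, f n) ^ (1/p)
        ≤ (C ^ p * ∑' n, (‖x n‖ * a n l) ^ p) ^ (1/p) :=
          Real.rpow_le_rpow (tsum_nonneg hfnn) h1 (by positivity)
      _ = C * (∑' n, (‖x n‖ * a n l) ^ p) ^ (1/p) := by
          rw [Real.mul_rpow (Real.rpow_nonneg hC p)
              (tsum_nonneg fun n => Real.rpow_nonneg (mul_nonneg (norm_nonneg _) (ha0 _ l)) p),
            one_div, Real.rpow_rpow_inv hC hp0.ne']
  | linf => exact hsupcase (hx l)
  | lzero => exact hsupcase (Filter.Tendsto.bddAbove_range (hx l))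

end Aux2
/-- Proposition 3.2 (b): characterization of power boundedness of the weighted forward shift
`F_w` on `λ_p(A)`. -/
theorem statement6 {𝕜 : Type*} [RCLike 𝕜] (a : ℕ → ℕ → ℝ) (ha : IsKoetheMatrix a)
    (P : PIndex) (w : ℕ → 𝕜) (hc : ContinuousOnLambda a P (Fshift w)) :
    PowerBoundedOnLambda a P (Fshift w) ↔
      ∀ k : ℕ, ∃ l : ℕ,
        (⨆ (n : ℕ) (m : ℕ) (_ : 1 ≤ m),
          ENNReal.ofReal ((∏ j ∈ Icc 1 m, ‖w (n + j)‖) * a (n + m) k) /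
            ENNReal.ofReal (a n l)) < ⊤ := by
  have ha0 : ∀ n k, 0 ≤ a n k := ha.1
  constructor
  · intro hPB k
    obtain ⟨l, C, hC, hP⟩ := hPB k
    refine ⟨l, ?_⟩
    have hbound : ∀ n m, 1 ≤ m →
        (∏ j ∈ Icc 1 m, ‖w (n + j)‖) * a (n + m) k ≤ C * a n l := by
      intro n m hm
      have h1 := hP m hm _ (mem_single a ha P n (1:𝕜))
      rw [fshift_iter_single, seminorm_single a ha P k (n+m) _,
        seminorm_single a ha P l n 1, norm_prod] at h1
      simpa using h1
    refine lt_of_le_of_lt ?_ (ENNReal.ofReal_lt_top (r := C))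
    refine iSup_le fun n => iSup_le fun m => iSup_le fun hm => ?_
    apply ENNReal.div_le_of_le_mul
    rw [← ENNReal.ofReal_mul hC.le]
    exact ENNReal.ofReal_le_ofReal (hbound n m hm)
  · intro h k
    obtain ⟨l, hS⟩ := h k
    set S := (⨆ (n : ℕ) (m : ℕ) (_ : 1 ≤ m),
      ENNReal.ofReal ((∏ j ∈ Icc 1 m, ‖w (n + j)‖) * a (n + m) k) /
        ENNReal.ofReal (a n l)) with hSdef
    have hCpos : (0:ℝ) < S.toReal + 1 := by positivity
    refine ⟨l, S.toReal + 1, hCpos, ?_⟩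
    intro m hm x hx
    refine bound_seminorm a ha P w k l _ hCpos.le ?_ m hm x hx
    intro n m' hm'
    have hnumnn : 0 ≤ (∏ j ∈ Icc 1 m', ‖w (n + j)‖) * a (n + m') k :=
      mul_nonneg (Finset.prod_nonneg fun _ _ => norm_nonneg _) (ha0 _ k)
    have hterm : ENNReal.ofReal ((∏ j ∈ Icc 1 m', ‖w (n + j)‖) * a (n + m') k) /
        ENNReal.ofReal (a n l) ≤ S :=
      le_iSup_of_le n (le_iSup_of_le m' (le_iSup_of_le hm' le_rfl))
    by_cases h0 : a n l = 0
    · have hz : ENNReal.ofReal ((∏ j ∈ Icc 1 m', ‖w (n + j)‖) * a (n + m') k) = 0 := by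
        by_contra hne
        rw [h0, ENNReal.ofReal_zero, ENNReal.div_zero hne] at hterm
        exact absurd (lt_of_le_of_lt hterm hS) (lt_irrefl ⊤)
      rw [ENNReal.ofReal_eq_zero] at hz
      rw [le_antisymm hz hnumnn, h0, mul_zero]
    · have hpos : 0 < a n l := lt_of_le_of_ne (ha0 n l) (Ne.symm h0)
      have hne : ENNReal.ofReal (a n l) ≠ 0 := by
        rw [ne_eq, ENNReal.ofReal_eq_zero]; linarith
      rw [ENNReal.div_le_iff hne ENNReal.ofReal_ne_top] at hterm
      have hfin : S * ENNReal.ofReal (a n l) ≠ ⊤ :=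
        ENNReal.mul_ne_top hS.ne ENNReal.ofReal_ne_top
      have h2 := ENNReal.toReal_mono hfin hterm
      rw [ENNReal.toReal_ofReal hnumnn, ENNReal.toReal_mul,
        ENNReal.toReal_ofReal (ha0 n l)] at h2
      nlinarith [ENNReal.toReal_nonneg (a := S)]
end
end
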